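/- Let 0 < θ < θ₁ < π/2, λ ∈ ℝ, μ ≥ 0. For any y ∈ ℂ lying on the contour Y_λ = {−λ + r e^{±iθ₁} : r ≥ 0}, and for the sector Σ = {w ∈ ℂ : |arg(w + λ − μ)| ≤ θ} (shifted sector with vertex at μ − λ on the real axis), the distance from y to Σ satisfies dist(y, Σ) ≥ |y + λ| sin(θ₁ − θ) + μ sin θ. -/

import Mathlib

open Complex Real

/-- Real part bound: for a unit direction `exp(c*I)`, the real part of `ζ * exp(c*I)`
is at most `|ζ|`. -/
lemma re_mul_exp_le_abs (ζ : ℂ) (c : ℝ) :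
    (ζ * Complex.exp ((c : ℂ) * Complex.I)).re ≤ ‖ζ‖ := by
  calc (ζ * Complex.exp ((c : ℂ) * Complex.I)).re
      ≤ ‖ζ * Complex.exp ((c : ℂ) * Complex.I)‖ := Complex.re_le_norm _
    _ = ‖ζ‖ := by
        rw [norm_mul, Complex.norm_exp]
        simp

lemma re_combo (r s mu b φ c : ℝ) (ζ : ℂ)
    (hζ : ζ = (r : ℂ) * Complex.exp ((b : ℂ) * Complex.I)
      - (s : ℂ) * Complex.exp ((φ : ℂ) * Complex.I) - (mu : ℂ)) :
    (ζ * Complex.exp ((c : ℂ) * Complex.I)).re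
      = r * Real.cos (b + c) - s * Real.cos (φ + c) - mu * Real.cos c := by
  subst hζ
  have h1 : ∀ a : ℝ, Complex.exp ((a : ℂ) * Complex.I) * Complex.exp ((c : ℂ) * Complex.I)
      = Complex.exp (((a + c : ℝ) : ℂ) * Complex.I) := by
    intro a
    rw [← Complex.exp_add]
    push_cast
    ring_nf
  simp only [sub_mul, mul_assoc, h1]
  simp only [Complex.sub_re, Complex.re_ofReal_mul, Complex.exp_ofReal_mul_I_re,
    Complex.ofReal_re]

/-- Planar geometry along the resolvent contour: for `0 < θ < θ₁ < π/2`, `λ ∈ ℝ`,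
`μ ≥ 0`, any `y` on the contour `Y_λ = {−λ + r e^{±iθ₁} : r ≥ 0}` satisfies
`dist(y, Σ) ≥ |y + λ| sin(θ₁ − θ) + μ sin θ`, where
`Σ = {w : |arg(w + λ − μ)| ≤ θ}` is the shifted sector with vertex `μ − λ`. -/
theorem stmt_11 (θ θ₁ lam mu : ℝ) (hθ : 0 < θ) (hθθ₁ : θ < θ₁) (hθ₁ : θ₁ < Real.pi / 2)
    (hmu : 0 ≤ mu) (y : ℂ)
    (hy : ∃ r : ℝ, 0 ≤ r ∧
      (y = -(lam : ℂ) + r * Complex.exp (θ₁ * Complex.I) ∨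
       y = -(lam : ℂ) + r * Complex.exp (-(θ₁ : ℂ) * Complex.I))) :
    ‖y + lam‖ * Real.sin (θ₁ - θ) + mu * Real.sin θ ≤
      Metric.infDist y {w : ℂ | |(w + lam - mu).arg| ≤ θ} := by
  obtain ⟨r, hr, hcase⟩ := hy
  have hne : Set.Nonempty {w : ℂ | |(w + lam - mu).arg| ≤ θ} := by
    refine ⟨(mu : ℂ) - lam, ?_⟩
    simp only [Set.mem_setOf_eq]
    have : (mu : ℂ) - lam + lam - mu = 0 := by ring
    rw [this, Complex.arg_zero]
    simp [le_of_lt hθ]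
  refine le_of_not_gt fun hlt => ?_
  rw [Metric.infDist_lt_iff hne] at hlt
  obtain ⟨w, hwmem, hd⟩ := hlt
  have hw : |(w + lam - mu).arg| ≤ θ := hwmem
  refine absurd hd (not_lt.mpr ?_)
  set s : ℝ := ‖w + lam - mu‖ with hs_def
  set φ : ℝ := (w + lam - mu).arg with hφ_def
  have hs0 : 0 ≤ s := norm_nonneg _
  have hw' : (s : ℂ) * Complex.exp ((φ : ℂ) * Complex.I) = w + lam - mu :=
    Complex.norm_mul_exp_arg_mul_I _
  have hφ1 : -θ ≤ φ := (abs_le.mp hw).1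
  have hφ2 : φ ≤ θ := (abs_le.mp hw).2
  have hpi : (0:ℝ) < Real.pi := Real.pi_pos
  have hsin1 : 0 ≤ Real.sin (θ₁ - θ) :=
    Real.sin_nonneg_of_nonneg_of_le_pi (by linarith) (by linarith)
  rcases hcase with hy | hy
  · -- y + λ = r e^{iθ₁}; use direction c = −(θ + π/2)
    have habs : ‖y + lam‖ = r := by
      rw [hy]
      have : -(lam : ℂ) + (r : ℂ) * Complex.exp ((θ₁ : ℂ) * Complex.I) + lam
          = (r : ℂ) * Complex.exp ((θ₁ : ℂ) * Complex.I) := by ring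
      rw [this, norm_mul, Complex.norm_exp]
      have h0 : ((θ₁ : ℂ) * Complex.I).re = 0 := by simp
      rw [h0, Real.exp_zero, mul_one, Complex.norm_real, Real.norm_eq_abs, _root_.abs_of_nonneg hr]
    have hζ : y - w = (r : ℂ) * Complex.exp ((θ₁ : ℂ) * Complex.I)
        - (s : ℂ) * Complex.exp ((φ : ℂ) * Complex.I) - (mu : ℂ) := by
      rw [hy]; linear_combination hw'
    have hre := re_combo r s mu θ₁ φ (-(θ + Real.pi / 2)) (y - w) hζ
    have hle := re_mul_exp_le_abs (y - w) (-(θ + Real.pi / 2))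
    rw [hre] at hle
    have e1 : Real.cos (θ₁ + -(θ + Real.pi / 2)) = Real.sin (θ₁ - θ) := by
      rw [show θ₁ + -(θ + Real.pi / 2) = (θ₁ - θ) - Real.pi / 2 by ring, Real.cos_sub_pi_div_two]
    have e2 : Real.cos (φ + -(θ + Real.pi / 2)) = -Real.sin (θ - φ) := by
      rw [show φ + -(θ + Real.pi / 2) = -((θ - φ) + Real.pi / 2) by ring, Real.cos_neg,
        Real.cos_add_pi_div_two]
    have e3 : Real.cos (-(θ + Real.pi / 2)) = -Real.sin θ := by
      rw [Real.cos_neg, Real.cos_add_pi_div_two]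
    rw [e1, e2, e3] at hle
    have hsinφ : 0 ≤ Real.sin (θ - φ) :=
      Real.sin_nonneg_of_nonneg_of_le_pi (by linarith) (by linarith)
    have hdist : dist y w = ‖y - w‖ := by
      rw [Complex.dist_eq]
    rw [hdist, habs]
    nlinarith [mul_nonneg hs0 hsinφ]
  · -- y + λ = r e^{−iθ₁}; use direction c = θ + π/2
    have habs : ‖y + lam‖ = r := by
      rw [hy]
      have : -(lam : ℂ) + (r : ℂ) * Complex.exp (-(θ₁ : ℂ) * Complex.I) + lam
          = (r : ℂ) * Complex.exp (-(θ₁ : ℂ) * Complex.I) := by ring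
      rw [this, norm_mul, Complex.norm_exp]
      have h0 : (-(θ₁ : ℂ) * Complex.I).re = 0 := by simp
      rw [h0, Real.exp_zero, mul_one, Complex.norm_real, Real.norm_eq_abs, _root_.abs_of_nonneg hr]
    have hζ : y - w = (r : ℂ) * Complex.exp (((-θ₁ : ℝ) : ℂ) * Complex.I)
        - (s : ℂ) * Complex.exp ((φ : ℂ) * Complex.I) - (mu : ℂ) := by
      rw [hy]; push_cast; linear_combination hw'
    have hre := re_combo r s mu (-θ₁) φ (θ + Real.pi / 2) (y - w) hζ
    have hle := re_mul_exp_le_abs (y - w) (θ + Real.pi / 2)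
    rw [hre] at hle
    have e1 : Real.cos (-θ₁ + (θ + Real.pi / 2)) = Real.sin (θ₁ - θ) := by
      rw [show -θ₁ + (θ + Real.pi / 2) = Real.pi / 2 - (θ₁ - θ) by ring, Real.cos_pi_div_two_sub]
    have e2 : Real.cos (φ + (θ + Real.pi / 2)) = -Real.sin (φ + θ) := by
      rw [show φ + (θ + Real.pi / 2) = (φ + θ) + Real.pi / 2 by ring, Real.cos_add_pi_div_two]
    have e3 : Real.cos (θ + Real.pi / 2) = -Real.sin θ := Real.cos_add_pi_div_two θ
    rw [e1, e2, e3] at hle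
    have hsinφ : 0 ≤ Real.sin (φ + θ) :=
      Real.sin_nonneg_of_nonneg_of_le_pi (by linarith) (by linarith)
    have hdist : dist y w = ‖y - w‖ := by
      rw [Complex.dist_eq]
    rw [hdist, habs]
    nlinarith [mul_nonneg hs0 hsinφ]
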